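/- Let f ∈ ℂ[X₀,X₁] be homogeneous of degree d ≥ 4 and squarefree. Then the multiplication pairing R_f^d × R_f^{d−4} → R_f^{2d−4} is a perfect pairing; concretely: (a) for every u ∈ S^d with u ∉ J_f there exists v ∈ S^{d−4} with u·v ∉ J_f, and (b) for every nonzero v ∈ S^{d−4} there exists u ∈ S^d with u·v ∉ J_f. (Note that S^{d−4} ∩ J_f = 0, since J_f is generated in degree d−1.) -/

import Mathlib

open MvPolynomial

/-- The Jacobian ideal of a binary form `f ∈ ℂ[X₀,X₁]`: the ideal generated by the two
partial derivatives of `f`. -/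
noncomputable def jacIdeal (f : MvPolynomial (Fin 2) ℂ) : Ideal (MvPolynomial (Fin 2) ℂ) :=
  Ideal.span {pderiv 0 f, pderiv 1 f}

/-!
By Euler's identity `X₀ ∂₀f + X₁ ∂₁f = d • f`, a prime `p` dividing both partials of `f` divides
`f`, and since `f` is squarefree it divides both partials of `p` too. But `p` is a form (comparing
lowest and highest degree terms in `f = p q`), so its partials have smaller degree and must vanish,
and Euler's identity for `p` makes `p` constant. Thus `∂₀f, ∂₁f` are coprime forms of degree
`e = d - 1`, with no syzygy in degree `< e`. If `X₀ g, X₁ g ∈ J_f` with `deg g ≤ 2e - 3`, the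
relation `X₁ (X₀ g) = X₀ (X₁ g)` is such a syzygy, so it vanishes and `g ∈ J_f`: the socle of `R_f`
sits in degree `2e - 2 = 2d - 4`. Hence a form of degree `k` outside `J_f` can be multiplied by
variables, one at a time, up to a form of degree `2d - 4` outside `J_f`; with `k = d` and
`k = d - 4` this gives both halves of the pairing.
-/

namespace MvPolynomial

section CommSemiring

variable {σ R : Type*} [CommSemiring R]

section GradedAlgebra

attribute [local instance] MvPolynomial.gradedAlgebra

theorem homogeneousComponent_mul_of_isHomogeneous_of_le {q : MvPolynomial σ R} {e k : ℕ}
    (hq : q.IsHomogeneous e) (hek : e ≤ k) (s : MvPolynomial σ R) :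
    homogeneousComponent k (q * s) = q * homogeneousComponent (k - e) s := by
  rw [← decomposition.decompose'_apply, ← decomposition.decompose'_apply]
  exact DirectSum.coe_decompose_mul_of_left_mem_of_le (homogeneousSubmodule σ R)
    ((mem_homogeneousSubmodule e q).mpr hq) hek

theorem homogeneousComponent_mul_of_isHomogeneous_of_lt {q : MvPolynomial σ R} {e k : ℕ}
    (hq : q.IsHomogeneous e) (hke : k < e) (s : MvPolynomial σ R) :
    homogeneousComponent k (q * s) = 0 := by
  rw [← decomposition.decompose'_apply]
  exact DirectSum.coe_decompose_mul_of_left_mem_of_not_le (homogeneousSubmodule σ R)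
    ((mem_homogeneousSubmodule e q).mpr hq) hke.not_ge

end GradedAlgebra

theorem IsHomogeneous.eq_zero_of_dvd_of_lt {q t : MvPolynomial σ R} {e j : ℕ}
    (hq : q.IsHomogeneous e) (ht : t.IsHomogeneous j) (hje : j < e) (hqt : q ∣ t) : t = 0 := by
  obtain ⟨s, rfl⟩ := hqt
  rw [← homogeneousComponent_eq_self ht, homogeneousComponent_mul_of_isHomogeneous_of_lt hq hje]

theorem exists_isHomogeneous_of_mem_span_pair {f₀ f₁ g : MvPolynomial σ R} {e k : ℕ}
    (hf₀ : f₀.IsHomogeneous e) (hf₁ : f₁.IsHomogeneous e) (hg : g.IsHomogeneous k) (hek : e ≤ k)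
    (hmem : g ∈ Ideal.span {f₀, f₁}) :
    ∃ a b : MvPolynomial σ R, a.IsHomogeneous (k - e) ∧ b.IsHomogeneous (k - e) ∧
      g = a * f₀ + b * f₁ := by
  obtain ⟨a, b, rfl⟩ := Ideal.mem_span_pair.mp hmem
  refine ⟨homogeneousComponent (k - e) a, homogeneousComponent (k - e) b,
    homogeneousComponent_isHomogeneous _ _, homogeneousComponent_isHomogeneous _ _, ?_⟩
  rw [← homogeneousComponent_eq_self hg, map_add, mul_comm a, mul_comm b,
    homogeneousComponent_mul_of_isHomogeneous_of_le hf₀ hek,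
    homogeneousComponent_mul_of_isHomogeneous_of_le hf₁ hek, mul_comm f₀, mul_comm f₁]

theorem eq_zero_of_mem_span_pair_of_lt {f₀ f₁ g : MvPolynomial σ R} {e k : ℕ}
    (hf₀ : f₀.IsHomogeneous e) (hf₁ : f₁.IsHomogeneous e) (hg : g.IsHomogeneous k) (hke : k < e)
    (hmem : g ∈ Ideal.span {f₀, f₁}) : g = 0 := by
  obtain ⟨a, b, rfl⟩ := Ideal.mem_span_pair.mp hmem
  rw [← homogeneousComponent_eq_self hg, map_add, mul_comm a, mul_comm b,
    homogeneousComponent_mul_of_isHomogeneous_of_lt hf₀ hke,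
    homogeneousComponent_mul_of_isHomogeneous_of_lt hf₁ hke, add_zero]

theorem order_coe_le_totalDegree {p : MvPolynomial σ R} (hp : p ≠ 0) :
    (p : MvPowerSeries σ R).order ≤ p.totalDegree := by
  obtain ⟨m, hm, hdeg⟩ := p.support.exists_mem_eq_sup (support_nonempty.mpr hp) Finsupp.degree
  have hcoeff : MvPowerSeries.coeff m (p : MvPowerSeries σ R) ≠ 0 := by
    rwa [coeff_coe, ← mem_support_iff]
  calc (p : MvPowerSeries σ R).order ≤ m.degree := MvPowerSeries.order_le hcoeff
    _ = p.totalDegree := congrArg _ hdeg.symm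

theorem IsHomogeneous.le_order_coe {f : MvPolynomial σ R} {n : ℕ} (hf : f.IsHomogeneous n) :
    (n : ℕ∞) ≤ (f : MvPowerSeries σ R).order :=
  MvPowerSeries.nat_le_order fun _ hd => by rw [coeff_coe, hf.coeff_eq_zero hd.ne]

theorem isHomogeneous_of_totalDegree_le_order {p : MvPolynomial σ R}
    (h : (p.totalDegree : ℕ∞) ≤ (p : MvPowerSeries σ R).order) :
    p.IsHomogeneous p.totalDegree := by
  intro m hm
  rw [show (1 : σ → ℕ) = fun _ ↦ 1 from rfl, ← Finsupp.degree_eq_weight_one (R := ℕ)]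
  refine le_antisymm (le_totalDegree (mem_support_iff.mpr hm)) ?_
  exact_mod_cast h.trans (MvPowerSeries.order_le (by rwa [coeff_coe]))

theorem IsHomogeneous.isHomogeneous_of_dvd [NoZeroDivisors R] {f p : MvPolynomial σ R} {n : ℕ}
    (hf : f.IsHomogeneous n) (hf0 : f ≠ 0) (hpf : p ∣ f) : p.IsHomogeneous p.totalDegree := by
  obtain ⟨q, rfl⟩ := hpf
  have hp : p ≠ 0 := left_ne_zero_of_mul hf0
  have hq : q ≠ 0 := right_ne_zero_of_mul hf0
  apply isHomogeneous_of_totalDegree_le_order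
  have hsum := hf.le_order_coe
  rw [coe_mul, MvPowerSeries.order_mul, ← hf.totalDegree hf0,
    totalDegree_mul_of_isDomain hp hq] at hsum
  have hp' := order_coe_le_totalDegree hp
  have hq' := order_coe_le_totalDegree hq
  lift (p : MvPowerSeries σ R).order to ℕ using (hp'.trans_lt (ENat.natCast_lt_top _)).ne with a
  lift (q : MvPowerSeries σ R).order to ℕ using (hq'.trans_lt (ENat.natCast_lt_top _)).ne with b
  norm_cast at *
  omega

end CommSemiring

section Field

variable {σ K : Type*} [Field K]

theorem isUnit_of_totalDegree_eq_zero {p : MvPolynomial σ K} (hp : p ≠ 0)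
    (h : p.totalDegree = 0) : IsUnit p := by
  rw [totalDegree_eq_zero_iff_eq_C] at h
  rw [h] at hp ⊢
  exact (isUnit_iff_ne_zero.mpr fun h0 => hp (by rw [h0, C_0])).map C

theorem IsHomogeneous.dvd_of_forall_dvd_pderiv [Fintype σ] [CharZero K]
    {f p : MvPolynomial σ K} {n : ℕ} (hf : f.IsHomogeneous n) (hn : n ≠ 0)
    (h : ∀ i, p ∣ pderiv i f) : p ∣ f := by
  have hunit : IsUnit (n : MvPolynomial σ K) := by
    rw [← map_natCast C]
    exact (isUnit_iff_ne_zero.mpr (Nat.cast_ne_zero.mpr hn)).map C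
  rw [← hunit.dvd_mul_left, ← nsmul_eq_mul, ← hf.sum_X_mul_pderiv]
  exact Finset.dvd_sum fun i _ => (h i).mul_left _

theorem IsHomogeneous.not_forall_prime_dvd_pderiv [Fintype σ] [CharZero K]
    {f p : MvPolynomial σ K} {n : ℕ} (hf : f.IsHomogeneous n) (hn : n ≠ 0) (hsf : Squarefree f)
    (hp : Prime p) : ¬ ∀ i, p ∣ pderiv i f := by
  intro h
  obtain ⟨q, rfl⟩ := hf.dvd_of_forall_dvd_pderiv hn h
  have hpq : ¬ p ∣ q := fun ⟨r, hr⟩ => hp.not_isUnit (hsf p ⟨r, by rw [hr, mul_assoc]⟩)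
  have hpp (i : σ) : p ∣ pderiv i p := by
    have hi := h i
    rw [Derivation.leibniz, smul_eq_mul, smul_eq_mul, mul_comm q] at hi
    exact (hp.dvd_or_dvd ((dvd_add_right (dvd_mul_right p _)).mp hi)).resolve_right hpq
  have hph : p.IsHomogeneous p.totalDegree :=
    hf.isHomogeneous_of_dvd hsf.ne_zero (dvd_mul_right p q)
  have hdeg : p.totalDegree ≠ 0 := fun h0 =>
    hp.not_isUnit (isUnit_of_totalDegree_eq_zero hp.ne_zero h0)
  have hp0 (i : σ) : pderiv i p = 0 :=
    hph.eq_zero_of_dvd_of_lt hph.pderiv (by omega) (hpp i)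
  have heuler := hph.sum_X_mul_pderiv
  simp only [hp0, mul_zero, Finset.sum_const_zero] at heuler
  exact (smul_ne_zero hdeg hp.ne_zero) heuler.symm

theorem IsHomogeneous.isRelPrime_pderiv [CharZero K] {f : MvPolynomial (Fin 2) K} {n : ℕ}
    (hf : f.IsHomogeneous n) (hn : n ≠ 0) (hsf : Squarefree f) :
    IsRelPrime (pderiv 0 f) (pderiv 1 f) := by
  have hnot := fun p => hf.not_forall_prime_dvd_pderiv hn hsf (p := p)
  refine WfDvdMonoid.isRelPrime_of_no_irreducible_factors ?_ fun p hp h₀ h₁ =>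
    hnot p hp.prime (Fin.forall_fin_two.mpr ⟨h₀, h₁⟩)
  -- if both partials vanished, the prime `X 0` would divide them
  rintro ⟨h₀, h₁⟩
  exact hnot (X 0) X_prime (Fin.forall_fin_two.mpr ⟨h₀ ▸ dvd_zero _, h₁ ▸ dvd_zero _⟩)

theorem eq_zero_of_mul_eq_mul_of_isRelPrime {f₀ f₁ a b : MvPolynomial σ K} {e j : ℕ}
    (hf₀ : f₀.IsHomogeneous e) (hf₁ : f₁.IsHomogeneous e) (hcop : IsRelPrime f₀ f₁)
    (ha : a.IsHomogeneous j) (hb : b.IsHomogeneous j) (hje : j < e) (hab : a * f₀ = b * f₁) :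
    a = 0 ∧ b = 0 :=
  ⟨hf₁.eq_zero_of_dvd_of_lt ha hje (hcop.symm.dvd_of_dvd_mul_right ⟨b, by rw [hab, mul_comm]⟩),
    hf₀.eq_zero_of_dvd_of_lt hb hje (hcop.dvd_of_dvd_mul_right ⟨a, by rw [← hab, mul_comm]⟩)⟩

theorem mem_span_pair_of_X_mul_mem {f₀ f₁ g : MvPolynomial (Fin 2) K} {e k : ℕ}
    (hf₀ : f₀.IsHomogeneous e) (hf₁ : f₁.IsHomogeneous e) (hcop : IsRelPrime f₀ f₁)
    (hg : g.IsHomogeneous k) (hk : k + 3 ≤ 2 * e)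
    (h₀ : X 0 * g ∈ Ideal.span {f₀, f₁}) (h₁ : X 1 * g ∈ Ideal.span {f₀, f₁}) :
    g ∈ Ideal.span {f₀, f₁} := by
  have hXg (i : Fin 2) : (X i * g).IsHomogeneous (k + 1) := by
    simpa only [add_comm 1 k] using (isHomogeneous_X K i).mul hg
  rcases lt_or_ge (k + 1) e with hlt | hle
  · have h0 := eq_zero_of_mem_span_pair_of_lt hf₀ hf₁ (hXg 0) hlt h₀
    rw [(mul_eq_zero.mp h0).resolve_left (X_ne_zero 0)]
    exact Ideal.zero_mem _
  obtain ⟨a₀, b₀, ha₀, hb₀, hg₀⟩ := exists_isHomogeneous_of_mem_span_pair hf₀ hf₁ (hXg 0) hle h₀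
  obtain ⟨a₁, b₁, ha₁, hb₁, hg₁⟩ := exists_isHomogeneous_of_mem_span_pair hf₀ hf₁ (hXg 1) hle h₁
  have hhom {p q : MvPolynomial (Fin 2) K} (hp : p.IsHomogeneous (k + 1 - e))
      (hq : q.IsHomogeneous (k + 1 - e)) : (X 1 * p - X 0 * q).IsHomogeneous (k + 1 - e + 1) := by
    simpa only [add_comm 1] using ((isHomogeneous_X K 1).mul hp).sub ((isHomogeneous_X K 0).mul hq)
  -- `X₁ (X₀ g) = X₀ (X₁ g)` is a syzygy of `f₀, f₁` of degree `< e`, so coprimality kills it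
  obtain ⟨ha, hb⟩ := eq_zero_of_mul_eq_mul_of_isRelPrime hf₀ hf₁ hcop (hhom ha₀ ha₁)
    (by simpa only [neg_sub] using (hhom hb₀ hb₁).neg) (by omega)
    (by linear_combination X 0 * hg₁ - X 1 * hg₀)
  have hX₀ {p q : MvPolynomial (Fin 2) K} (h : X 1 * p - X 0 * q = 0) : X 0 ∣ p :=
    (X_prime.dvd_or_dvd ⟨q, sub_eq_zero.mp h⟩).resolve_left (by simp)
  obtain ⟨a, rfl⟩ := hX₀ ha
  obtain ⟨b, rfl⟩ := hX₀ (p := b₀) (q := b₁) (by linear_combination -hb)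
  have hg : g = a * f₀ + b * f₁ :=
    mul_left_cancel₀ (X_ne_zero 0) (by rw [hg₀]; ring)
  exact hg ▸ Ideal.mem_span_pair.mpr ⟨a, b, rfl⟩

theorem exists_isHomogeneous_mul_notMem_span_pair {f₀ f₁ : MvPolynomial (Fin 2) K} {e : ℕ}
    (hf₀ : f₀.IsHomogeneous e) (hf₁ : f₁.IsHomogeneous e) (hcop : IsRelPrime f₀ f₁) (n : ℕ)
    {g : MvPolynomial (Fin 2) K} {k : ℕ} (hg : g.IsHomogeneous k)
    (hgJ : g ∉ Ideal.span {f₀, f₁}) (hkn : k + n + 2 ≤ 2 * e) :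
    ∃ w : MvPolynomial (Fin 2) K, w.IsHomogeneous n ∧ w * g ∉ Ideal.span {f₀, f₁} := by
  induction n generalizing g k with
  | zero => exact ⟨1, isHomogeneous_one _ _, by rwa [one_mul]⟩
  | succ n ih =>
    obtain ⟨i, hi⟩ : ∃ i : Fin 2, X i * g ∉ Ideal.span {f₀, f₁} := by
      by_contra! h
      exact hgJ (mem_span_pair_of_X_mul_mem hf₀ hf₁ hcop hg (by omega) (h 0) (h 1))
    have hXg : (X i * g).IsHomogeneous (k + 1) := by
      simpa only [add_comm 1 k] using (isHomogeneous_X K i).mul hg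
    obtain ⟨w, hw, hwg⟩ := ih hXg hi (by omega)
    exact ⟨w * X i, hw.mul (isHomogeneous_X K i), by rwa [mul_assoc]⟩

end Field

end MvPolynomial

/-- If `f ∈ ℂ[X₀,X₁]` is homogeneous of degree `d ≥ 4` and squarefree, then the multiplication
pairing `R_f^d × R_f^{d−4} → R_f^{2d−4}` is perfect: (a) for every `u ∈ S^d` with `u ∉ J_f`
there is `v ∈ S^{d−4}` with `u·v ∉ J_f`, and (b) for every nonzero `v ∈ S^{d−4}` there is
`u ∈ S^d` with `u·v ∉ J_f`. -/
theorem stmt7 (d : ℕ) (hd : 4 ≤ d) (f : MvPolynomial (Fin 2) ℂ)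
    (hf : f.IsHomogeneous d) (hsf : Squarefree f) :
    (∀ u : MvPolynomial (Fin 2) ℂ, u.IsHomogeneous d → u ∉ jacIdeal f →
      ∃ v : MvPolynomial (Fin 2) ℂ, v.IsHomogeneous (d - 4) ∧ u * v ∉ jacIdeal f) ∧
    (∀ v : MvPolynomial (Fin 2) ℂ, v.IsHomogeneous (d - 4) → v ≠ 0 →
      ∃ u : MvPolynomial (Fin 2) ℂ, u.IsHomogeneous d ∧ u * v ∉ jacIdeal f) := by
  have hf₀ := hf.pderiv (i := 0)
  have hf₁ := hf.pderiv (i := 1)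
  have hcop := hf.isRelPrime_pderiv (by omega) hsf
  refine ⟨fun u hu huJ => ?_, fun v hv hv0 => ?_⟩
  · obtain ⟨w, hw, hwu⟩ :=
      exists_isHomogeneous_mul_notMem_span_pair hf₀ hf₁ hcop (d - 4) hu huJ (by omega)
    exact ⟨w, hw, by rwa [mul_comm]⟩
  · have hvJ : v ∉ jacIdeal f := fun hmem =>
      hv0 (eq_zero_of_mem_span_pair_of_lt hf₀ hf₁ hv (by omega) hmem)
    exact exists_isHomogeneous_mul_notMem_span_pair hf₀ hf₁ hcop d hv hvJ (by omega)
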